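/- arXiv:2508.21684 — 3 statements merged into one kernel-verified Lean document; each statement's English description precedes it below -/
import Mathlib

section
/- Under the ARE as above with Q positive definite, every eigenvalue of A − BR⁻¹BᵀP̄ has strictly negative real part (the closed-loop system is Hurwitz). -/
/-!
Substituting the gain into the Riccati equation turns it into the Lyapunov equation
`A_clᵀ P + P A_cl = -(Q + P B R⁻¹ Bᵀ P)` for the closed-loop matrix `A_cl`, whose right-hand side
is negative definite. Evaluating its quadratic form at a complex eigenvector `A_cl v = μ v` gives
`2 Re μ · v* P v = -v* (Q + P B R⁻¹ Bᵀ P) v < 0`, and `v* P v > 0`.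
-/

open Matrix
open scoped ComplexOrder

namespace Matrix

variable {ι 𝕜 : Type*} [RCLike 𝕜]

theorem conjTranspose_map_algebraMap {κ : Type*} (M : Matrix ι κ ℝ) :
    (M.map (algebraMap ℝ 𝕜))ᴴ = Mᵀ.map (algebraMap ℝ 𝕜) := by
  rw [← conjTranspose_eq_transpose_of_trivial, conjTranspose_map]
  intro r
  simp

variable [Fintype ι]

theorem PosSemidef.map_algebraMap {M : Matrix ι ι ℝ} (hM : M.PosSemidef) :
    (M.map (algebraMap ℝ 𝕜)).PosSemidef := by
  classical
  obtain ⟨C, rfl⟩ : ∃ C : Matrix ι ι ℝ, M = Cᴴ * C := by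
    open scoped MatrixOrder in exact CStarAlgebra.nonneg_iff_eq_star_mul_self.mp hM.nonneg
  rw [Matrix.map_mul, conjTranspose_eq_transpose_of_trivial, ← conjTranspose_map_algebraMap]
  exact posSemidef_conjTranspose_mul_self _

theorem PosDef.map_algebraMap [DecidableEq ι] {M : Matrix ι ι ℝ} (hM : M.PosDef) :
    (M.map (algebraMap ℝ 𝕜)).PosDef := by
  refine hM.posSemidef.map_algebraMap.posDef_iff_det_ne_zero.mpr ?_
  rw [← RingHom.mapMatrix_apply, ← RingHom.map_det]
  simpa using hM.det_pos.ne'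

theorem exists_mulVec_eq_smul_of_mem_spectrum [DecidableEq ι] {K : Type*} [Field K]
    {M : Matrix ι ι K} {μ : K} (hμ : μ ∈ spectrum K M) :
    ∃ v ≠ 0, M *ᵥ v = μ • v := by
  rw [← spectrum_toLin', ← Module.End.hasEigenvalue_iff_mem_spectrum] at hμ
  obtain ⟨v, hv⟩ := hμ.exists_hasEigenvector
  exact ⟨v, hv.2, by simpa using hv.apply_eq_smul⟩

theorem re_lt_zero_of_mem_spectrum_of_lyapunov [DecidableEq ι] {M P W : Matrix ι ι 𝕜}
    (hP : P.PosDef) (hW : W.PosDef) (hL : Mᴴ * P + P * M + W = 0) {μ : 𝕜}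
    (hμ : μ ∈ spectrum 𝕜 M) : RCLike.re μ < 0 := by
  obtain ⟨v, hv0, hv⟩ := exists_mulVec_eq_smul_of_mem_spectrum hμ
  set c := star v ⬝ᵥ P *ᵥ v
  set w := star v ⬝ᵥ W *ᵥ v
  have hquad : star μ * c + μ * c + w = 0 := by
    have h := congrArg (fun X => star v ⬝ᵥ X *ᵥ v) hL
    simpa only [add_mulVec, ← mulVec_mulVec, dotProduct_add, zero_mulVec, dotProduct_zero,
      dotProduct_mulVec (star v) Mᴴ, ← star_mulVec, hv, star_smul, smul_dotProduct,
      mulVec_smul, dotProduct_smul, smul_eq_mul] using h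
  have hc := hP.re_dotProduct_pos hv0
  have hw := hW.re_dotProduct_pos hv0
  have hre := congrArg RCLike.re hquad
  simp only [map_add, RCLike.mul_re, RCLike.star_def, RCLike.conj_re, RCLike.conj_im,
    map_zero] at hre
  nlinarith

end Matrix

theorem closedLoop_lyapunov_of_riccati {α ι κ : Type*} [CommRing α] [Fintype ι] [Fintype κ]
    [DecidableEq κ] {A P Q : Matrix ι ι α} {B : Matrix ι κ α} {R : Matrix κ κ α} (hR : Rᵀ = R)
    (hP : Pᵀ = P) (hARE : Aᵀ * P + P * A - P * B * R⁻¹ * Bᵀ * P + Q = 0) :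
    (A - B * (R⁻¹ * Bᵀ * P))ᵀ * P + P * (A - B * (R⁻¹ * Bᵀ * P))
      + (Q + P * B * R⁻¹ * Bᵀ * P) = 0 := by
  rw [← hARE, transpose_sub, transpose_mul, transpose_mul, transpose_mul, transpose_nonsing_inv,
    transpose_transpose, hR, hP]
  simp only [Matrix.sub_mul, Matrix.mul_sub, Matrix.mul_assoc]
  abel

/-- Under the ARE with `Q ≻ 0`, every (complex) eigenvalue of the closed-loop
matrix `A − BR⁻¹BᵀP̄` has strictly negative real part (Hurwitz). -/
theorem stmt3 {n m : ℕ} (A : Matrix (Fin n) (Fin n) ℝ)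
    (B : Matrix (Fin n) (Fin m) ℝ) (Q : Matrix (Fin n) (Fin n) ℝ)
    (R : Matrix (Fin m) (Fin m) ℝ) (P : Matrix (Fin n) (Fin n) ℝ)
    (hQ : Q.PosDef) (hR : R.PosDef) (hP : P.PosDef)
    (hARE : Aᵀ * P + P * A - P * B * R⁻¹ * Bᵀ * P + Q = 0) :
    ∀ μ ∈ spectrum ℂ ((A - B * (R⁻¹ * Bᵀ * P)).map (algebraMap ℝ ℂ)),
      μ.re < 0 := by
  intro μ hμ
  have hPt : Pᵀ = P := by rw [← conjTranspose_eq_transpose_of_trivial]; exact hP.isHermitian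
  have hRt : Rᵀ = R := by rw [← conjTranspose_eq_transpose_of_trivial]; exact hR.isHermitian
  have hgain : (P * B * R⁻¹ * Bᵀ * P).PosSemidef := by
    have h := hR.inv.posSemidef.conjTranspose_mul_mul_same (Bᵀ * P)
    rwa [conjTranspose_eq_transpose_of_trivial, transpose_mul, transpose_transpose, hPt,
      ← Matrix.mul_assoc] at h
  have hL := congrArg (algebraMap ℝ ℂ).mapMatrix (closedLoop_lyapunov_of_riccati hRt hPt hARE)
  rw [map_add, map_add, map_mul, map_mul, map_zero] at hL
  simp only [RingHom.mapMatrix_apply, ← conjTranspose_map_algebraMap] at hL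
  simpa using re_lt_zero_of_mem_spectrum_of_lyapunov hP.map_algebraMap
    (hQ.add_posSemidef hgain).map_algebraMap hL hμ
end

section
/- Let x : [0,∞) → ℝ^n solve ẋ = (A − BK̄)x + B u_d + d(t,x), where (A−BK̄)ᵀP̄ + P̄(A−BK̄) ⪯ 0 for a symmetric positive definite P̄, B ∈ ℝ^{n×m} has rank n, |d(t,x)| < λ(t,x) for all (t,x), and u_d := −(λ(t,x)/|P̄x|) B⁺ P̄x with B⁺ := Bᵀ(BBᵀ)⁻¹. Then along any trajectory with P̄x(t) ≠ 0, the function V(x) = ½ xᵀP̄x satisfies d/dt V(x(t)) ≤ (|d| − λ)|P̄x(t)| < 0. -/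
open Matrix

noncomputable def euclNorm {n : ℕ} (v : Fin n → ℝ) : ℝ := Real.sqrt (v ⬝ᵥ v)

/-!
Differentiating `V` along the trajectory gives `V̇ = (P̄x)ᵀẋ`, which splits into three terms.
The nominal term `(P̄x)ᵀ(A − BK̄)x` is half of `xᵀ((A − BK̄)ᵀP̄ + P̄(A − BK̄))x ≤ 0`. Since `B` has full row
rank, `BB⁺ = I`, so the redesign term is `(P̄x)ᵀBu_d = −(λ/|P̄x|)|P̄x|² = −λ|P̄x|`.
The disturbance term is at most `|d||P̄x|` by Cauchy–Schwarz.
-/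

section EuclNorm

variable {n : ℕ}

lemma euclNorm_eq_norm_toLp (v : Fin n → ℝ) : euclNorm v = ‖WithLp.toLp 2 v‖ := by
  simp only [euclNorm, EuclideanSpace.norm_eq, Real.norm_eq_abs, dotProduct, sq, abs_mul_abs_self]

lemma dotProduct_eq_inner_toLp (v w : Fin n → ℝ) :
    v ⬝ᵥ w = inner ℝ (WithLp.toLp 2 v) (WithLp.toLp 2 w) := by
  rw [EuclideanSpace.inner_eq_star_dotProduct, star_trivial, dotProduct_comm]

lemma euclNorm_mul_self (v : Fin n → ℝ) : euclNorm v * euclNorm v = v ⬝ᵥ v := by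
  rw [euclNorm_eq_norm_toLp, dotProduct_eq_inner_toLp, real_inner_self_eq_norm_mul_norm]

lemma euclNorm_pos {v : Fin n → ℝ} (hv : v ≠ 0) : 0 < euclNorm v := by
  rw [euclNorm_eq_norm_toLp, norm_pos_iff]
  exact fun h => hv (by simpa using congrArg WithLp.ofLp h)

lemma dotProduct_le_euclNorm_mul_euclNorm (v w : Fin n → ℝ) :
    v ⬝ᵥ w ≤ euclNorm v * euclNorm w := by
  rw [dotProduct_eq_inner_toLp, euclNorm_eq_norm_toLp, euclNorm_eq_norm_toLp]
  exact real_inner_le_norm _ _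

lemma dotProduct_div_euclNorm_smul_self {v : Fin n → ℝ} (hv : v ≠ 0) (c : ℝ) :
    v ⬝ᵥ ((c / euclNorm v) • v) = c * euclNorm v := by
  have hpos := euclNorm_pos hv
  rw [dotProduct_smul, smul_eq_mul, ← euclNorm_mul_self]
  field_simp

end EuclNorm

lemma Matrix.isUnit_of_rank_eq_card {ι K : Type*} [Fintype ι] [DecidableEq ι] [Field K]
    {A : Matrix ι ι K} (h : A.rank = Fintype.card ι) : IsUnit A := by
  rw [← mulVec_surjective_iff_isUnit, ← coe_mulVecLin, ← LinearMap.range_eq_top]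
  apply Submodule.eq_top_of_finrank_eq
  rw [← Matrix.rank, h, Module.finrank_fintype_fun_eq_card]

lemma Matrix.mul_transpose_mul_inv_of_rank_eq_card {ι κ K : Type*} [Fintype ι] [DecidableEq ι]
    [Fintype κ] [Field K] [LinearOrder K] [IsStrictOrderedRing K]
    {B : Matrix ι κ K} (h : B.rank = Fintype.card ι) : B * (Bᵀ * (B * Bᵀ)⁻¹) = 1 := by
  rw [← Matrix.mul_assoc, mul_nonsing_inv]
  exact (isUnit_iff_isUnit_det _).mp (isUnit_of_rank_eq_card (by rw [rank_self_mul_transpose, h]))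

lemma Matrix.dotProduct_mulVec_nonpos_of_posSemidef_neg {ι : Type*} [Fintype ι]
    {P M : Matrix ι ι ℝ} (hP : Pᵀ = P) (hLyap : (-(Mᵀ * P + P * M)).PosSemidef) (v : ι → ℝ) :
    (P *ᵥ v) ⬝ᵥ (M *ᵥ v) ≤ 0 := by
  have h := hLyap.dotProduct_mulVec_nonneg v
  have hvP : v ᵥ* P = P *ᵥ v := by rw [← mulVec_transpose, hP]
  rw [star_trivial, neg_mulVec, dotProduct_neg, add_mulVec, dotProduct_add, ← mulVec_mulVec,
    ← mulVec_mulVec, dotProduct_mulVec v Mᵀ, vecMul_transpose, dotProduct_mulVec v P, hvP,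
    dotProduct_comm (M *ᵥ v)] at h
  linarith

section Derivatives

variable {𝕜 ι : Type*} [NontriviallyNormedField 𝕜] [Fintype ι] {f g : 𝕜 → ι → 𝕜}
  {f' g' : ι → 𝕜} {t : 𝕜}

theorem HasDerivAt.dotProduct (hf : HasDerivAt f f' t) (hg : HasDerivAt g g' t) :
    HasDerivAt (fun s => f s ⬝ᵥ g s) (f' ⬝ᵥ g t + f t ⬝ᵥ g') t := by
  have := HasDerivAt.fun_sum (u := Finset.univ) fun i _ =>
    (hasDerivAt_pi.mp hf i).fun_mul (hasDerivAt_pi.mp hg i)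
  simpa only [_root_.dotProduct, Finset.sum_add_distrib] using this

theorem HasDerivAt.mulVec {κ : Type*} (A : Matrix κ ι 𝕜) (hf : HasDerivAt f f' t) :
    HasDerivAt (fun s => A *ᵥ f s) (A *ᵥ f') t :=
  hasDerivAt_pi.2 fun i => by
    simpa only [Matrix.mulVec, zero_dotProduct, zero_add] using
      (hasDerivAt_const t (A i)).dotProduct hf

theorem HasDerivAt.dotProduct_mulVec_self {P : Matrix ι ι 𝕜} (hP : Pᵀ = P)
    (hf : HasDerivAt f f' t) :
    HasDerivAt (fun s => f s ⬝ᵥ (P *ᵥ f s)) (2 * ((P *ᵥ f t) ⬝ᵥ f')) t := by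
  have hswap : f t ⬝ᵥ (P *ᵥ f') = (P *ᵥ f t) ⬝ᵥ f' := by
    rw [dotProduct_mulVec, ← mulVec_transpose, hP]
  refine (hf.dotProduct (hf.mulVec P)).congr_deriv ?_
  rw [hswap, dotProduct_comm f']
  ring

end Derivatives

/-- Lyapunov redesign for the linear system: along any trajectory of
`ẋ = (A − BK̄)x + B u_d + d(t,x)` with `P̄ x(t) ≠ 0`, the function
`V(x) = ½ xᵀP̄x` satisfies `d/dt V(x(t)) ≤ (|d| − λ)|P̄x(t)| < 0`. -/
theorem stmt4 {n m : ℕ} (A : Matrix (Fin n) (Fin n) ℝ)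
    (B : Matrix (Fin n) (Fin m) ℝ) (K : Matrix (Fin m) (Fin n) ℝ)
    (P : Matrix (Fin n) (Fin n) ℝ) (hP : P.PosDef)
    (hrank : B.rank = n)
    (hLyap : (-((A - B * K)ᵀ * P + P * (A - B * K))).PosSemidef)
    (lam : ℝ → (Fin n → ℝ) → ℝ) (d : ℝ → (Fin n → ℝ) → Fin n → ℝ)
    (hd : ∀ t x, euclNorm (d t x) < lam t x)
    (x : ℝ → Fin n → ℝ) (ud : ℝ → Fin m → ℝ)
    (hud : ∀ t, ud t = (-(lam t (x t) / euclNorm (P *ᵥ x t))) •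
      ((Bᵀ * (B * Bᵀ)⁻¹) *ᵥ (P *ᵥ x t)))
    (hx : ∀ t, HasDerivAt x ((A - B * K) *ᵥ x t + B *ᵥ ud t + d t (x t)) t) :
    ∀ t, 0 ≤ t → P *ᵥ x t ≠ 0 →
      deriv (fun s => (1 / 2) * (x s ⬝ᵥ (P *ᵥ x s))) t ≤
          (euclNorm (d t (x t)) - lam t (x t)) * euclNorm (P *ᵥ x t) ∧
        (euclNorm (d t (x t)) - lam t (x t)) * euclNorm (P *ᵥ x t) < 0 := by
  intro t _ hPx
  have hsymm : Pᵀ = P := by simpa using hP.isHermitian.eq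
  have hctrl : B *ᵥ ud t = (-(lam t (x t) / euclNorm (P *ᵥ x t))) • (P *ᵥ x t) := by
    rw [hud, mulVec_smul, mulVec_mulVec,
      mul_transpose_mul_inv_of_rank_eq_card (by rw [hrank, Fintype.card_fin]), one_mulVec]
  have hV : deriv (fun s => (1 / 2) * (x s ⬝ᵥ (P *ᵥ x s))) t =
      (P *ᵥ x t) ⬝ᵥ ((A - B * K) *ᵥ x t) - lam t (x t) * euclNorm (P *ᵥ x t) +
        (P *ᵥ x t) ⬝ᵥ d t (x t) := by
    rw [(((hx t).dotProduct_mulVec_self hsymm).const_mul (1 / 2)).deriv, one_div,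
      inv_mul_cancel_left₀ two_ne_zero, dotProduct_add, dotProduct_add, hctrl,
      neg_smul, dotProduct_neg, dotProduct_div_euclNorm_smul_self hPx, ← sub_eq_add_neg]
  refine ⟨?_, mul_neg_of_neg_of_pos (sub_neg.2 (hd _ _)) (euclNorm_pos hPx)⟩
  rw [hV, sub_mul, mul_comm (euclNorm (d t (x t)))]
  linarith [dotProduct_mulVec_nonpos_of_posSemidef_neg hsymm hLyap (x t),
    dotProduct_le_euclNorm_mul_euclNorm (P *ᵥ x t) (d t (x t))]
end

section
/- Suppose V(x) = ½xᵀP̄x with P̄ ≻ 0, and along trajectories of the disturbed closed-loop system with the regularized robust control, V̇(x(t)) ≤ (|d| − λ)|P̄x(t)| whenever |P̄x(t)| ≥ r, where sup|d| =: d₀ < λ. Then the trajectory converges in finite time to the set {x : |P̄x| ≤ r}, and |x| ≤ r/λ_min(P̄) on that set. -/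
open Matrix

lemma euclNorm_eq {n : ℕ} (v : Fin n → ℝ) :
    euclNorm v = ‖(WithLp.equiv 2 (Fin n → ℝ)).symm v‖ := by
  rw [norm_eq_sqrt_real_inner, EuclideanSpace.inner_eq_star_dotProduct]
  simp [euclNorm]

lemma euclNorm_nonneg {n : ℕ} (v : Fin n → ℝ) : 0 ≤ euclNorm v :=
  Real.sqrt_nonneg _

lemma inner_eq_dot {n : ℕ} (v u : Fin n → ℝ) :
    @inner ℝ _ _ ((WithLp.equiv 2 (Fin n → ℝ)).symm v)
      ((WithLp.equiv 2 (Fin n → ℝ)).symm u) = v ⬝ᵥ u := by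
  rw [EuclideanSpace.inner_eq_star_dotProduct]
  simp [dotProduct, mul_comm]

/-- Rayleigh lower bound: `λ_min * (y⬝y) ≤ y⬝(Py)`. -/
lemma rayleigh_min {n : ℕ} [NeZero n] (P : Matrix (Fin n) (Fin n) ℝ)
    (hP : P.PosDef) (y : Fin n → ℝ) :
    (⨅ i, hP.1.eigenvalues i) * (y ⬝ᵥ y) ≤ y ⬝ᵥ (P *ᵥ y) := by
  classical
  set b := hP.1.eigenvectorBasis with hb
  set Y : EuclideanSpace ℝ (Fin n) := (WithLp.equiv 2 (Fin n → ℝ)).symm y with hY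
  set Z : EuclideanSpace ℝ (Fin n) := (WithLp.equiv 2 (Fin n → ℝ)).symm (P *ᵥ y) with hZ
  have hreprZ : ∀ i, b.repr Z i = hP.1.eigenvalues i * b.repr Y i := by
    intro i
    rw [b.repr_apply_apply, b.repr_apply_apply]
    have h1 : (inner ℝ (b i) Z : ℝ) = (b i : Fin n → ℝ) ⬝ᵥ (P *ᵥ y) := by
      rw [EuclideanSpace.inner_eq_star_dotProduct]
      simp [hZ, dotProduct, mul_comm]
    have h2 : (inner ℝ (b i) Y : ℝ) = (b i : Fin n → ℝ) ⬝ᵥ y := by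
      rw [EuclideanSpace.inner_eq_star_dotProduct]
      simp [hY, dotProduct, mul_comm]
    rw [h1, h2]
    have hsym : (b i : Fin n → ℝ) ⬝ᵥ (P *ᵥ y) = (P *ᵥ (b i : Fin n → ℝ)) ⬝ᵥ y := by
      rw [dotProduct_mulVec, ← mulVec_transpose]
      congr 1
      have : Pᵀ = P := by
        have := hP.1
        simpa [Matrix.IsHermitian, Matrix.conjTranspose_eq_transpose_of_trivial] using this
      rw [this]
    have he : P *ᵥ (b i : Fin n → ℝ) = hP.1.eigenvalues i • (b i : Fin n → ℝ) :=
      hP.1.mulVec_eigenvectorBasis i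
    rw [hsym, he]
    exact smul_dotProduct (hP.1.eigenvalues i) (b i : Fin n → ℝ) y
  have hYZ : y ⬝ᵥ (P *ᵥ y) = ∑ i, b.repr Y i * b.repr Z i := by
    rw [← inner_eq_dot y (P *ᵥ y)]
    rw [show ((WithLp.equiv 2 (Fin n → ℝ)).symm y) = Y from rfl,
      show ((WithLp.equiv 2 (Fin n → ℝ)).symm (P *ᵥ y)) = Z from rfl]
    rw [← LinearIsometryEquiv.inner_map_map b.repr Y Z]
    simp only [EuclideanSpace.inner_eq_star_dotProduct]
    simp [dotProduct, mul_comm]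
  have hYY : y ⬝ᵥ y = ∑ i, b.repr Y i * b.repr Y i := by
    rw [← inner_eq_dot y y]
    rw [show ((WithLp.equiv 2 (Fin n → ℝ)).symm y) = Y from rfl]
    rw [← LinearIsometryEquiv.inner_map_map b.repr Y Y]
    simp only [EuclideanSpace.inner_eq_star_dotProduct]
    simp [dotProduct]
  rw [hYZ, hYY, Finset.mul_sum]
  apply Finset.sum_le_sum
  intro i _
  rw [hreprZ i]
  have hsq : 0 ≤ b.repr Y i * b.repr Y i := mul_self_nonneg _
  have hle : (⨅ j, hP.1.eigenvalues j) ≤ hP.1.eigenvalues i :=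
    ciInf_le (Set.Finite.bddBelow (Set.finite_range _)) i
  calc (⨅ j, hP.1.eigenvalues j) * (b.repr Y i * b.repr Y i)
      ≤ hP.1.eigenvalues i * (b.repr Y i * b.repr Y i) := by
        exact mul_le_mul_of_nonneg_right hle hsq
    _ = b.repr Y i * (hP.1.eigenvalues i * b.repr Y i) := by ring

/-- Practical stability with the regularized robust control: if
`V(x) = ½xᵀP̄x` satisfies `V̇ ≤ (d₀ − λ)|P̄x(t)|` whenever `|P̄x(t)| ≥ r`, with
`d₀ < λ`, then the trajectory reaches `{x : |P̄x| ≤ r}` in finite time, and on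
that set `|x| ≤ r/λ_min(P̄)`. -/
theorem stmt19 {n : ℕ} [NeZero n] (P : Matrix (Fin n) (Fin n) ℝ)
    (hP : P.PosDef) (d0 lam r : ℝ) (hd0 : 0 ≤ d0) (hdlam : d0 < lam)
    (hr : 0 < r)
    (x : ℝ → Fin n → ℝ) (w : ℝ → ℝ)
    (hw : ∀ t, HasDerivAt (fun s => (1 / 2) * (x s ⬝ᵥ (P *ᵥ x s))) (w t) t)
    (hdecay : ∀ t, 0 ≤ t → r ≤ euclNorm (P *ᵥ x t) →
      w t ≤ (d0 - lam) * euclNorm (P *ᵥ x t)) :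
    (∃ T, 0 ≤ T ∧ euclNorm (P *ᵥ x T) ≤ r) ∧
      ∀ y : Fin n → ℝ, euclNorm (P *ᵥ y) ≤ r →
        euclNorm y ≤ r / (⨅ i, hP.1.eigenvalues i) := by
  have hlammin : 0 < ⨅ i, hP.1.eigenvalues i := by
    obtain ⟨i, hi⟩ := exists_eq_ciInf_of_finite (f := fun i => hP.1.eigenvalues i)
    rw [← hi]
    exact hP.eigenvalues_pos i
  constructor
  · -- finite time reaching
    by_contra h
    push_neg at h
    set f : ℝ → ℝ := fun s => (1 / 2) * (x s ⬝ᵥ (P *ᵥ x s)) with hf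
    set c : ℝ := (lam - d0) * r with hc
    have hcpos : 0 < c := mul_pos (by linarith) hr
    set g : ℝ → ℝ := fun s => f s + c * s with hg
    have hg' : ∀ t, HasDerivAt g (w t + c) t := fun t => by
      have := (hw t).add ((hasDerivAt_id t).const_mul c); rw [mul_one] at this; exact this
    have hderiv_le : ∀ t, 0 < t → w t + c ≤ 0 := by
      intro t ht
      have hrt : r ≤ euclNorm (P *ᵥ x t) := le_of_lt (h t ht.le)
      have h1 := hdecay t ht.le hrt
      have h2 : (d0 - lam) * euclNorm (P *ᵥ x t) ≤ (d0 - lam) * r := by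
        apply mul_le_mul_of_nonpos_left hrt (by linarith)
      have : w t ≤ (d0 - lam) * r := h1.trans h2
      rw [hc]; linarith
    have hanti : AntitoneOn g (Set.Ici (0 : ℝ)) := by
      apply antitoneOn_of_deriv_nonpos (convex_Ici 0)
      · exact continuousOn_of_forall_continuousAt fun t _ => (hg' t).continuousAt
      · intro t _
        exact (hg' t).differentiableAt.differentiableWithinAt
      · intro t ht
        rw [interior_Ici] at ht
        rw [(hg' t).deriv]
        exact hderiv_le t ht
    set T : ℝ := f 0 / c + 1 with hT
    have hTpos : 0 < T := by
      have hf0 : 0 ≤ f 0 := by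
        have := hP.posSemidef.dotProduct_mulVec_nonneg (x 0)
        simp only [star_trivial] at this
        simp only [hf]
        have : (0:ℝ) ≤ x 0 ⬝ᵥ (P *ᵥ x 0) := by
          simpa [star, dotProduct] using this
        linarith
      positivity
    have hgle : g T ≤ g 0 := hanti (Set.self_mem_Ici) (Set.mem_Ici.mpr hTpos.le) hTpos.le
    have hfT : 0 ≤ f T := by
      have := hP.posSemidef.dotProduct_mulVec_nonneg (x T)
      simp only [star_trivial] at this
      have : (0:ℝ) ≤ x T ⬝ᵥ (P *ᵥ x T) := by
        simpa [star, dotProduct] using this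
      simp only [hf]; linarith
    have : c * T ≤ f 0 := by
      simp only [hg] at hgle
      simp only [mul_zero, add_zero] at hgle
      linarith
    rw [hT, mul_add, mul_one, mul_div_cancel₀ _ (ne_of_gt hcpos)] at this
    linarith
  · -- the set bound
    intro y hy
    have hray := rayleigh_min P hP y
    have hCS : y ⬝ᵥ (P *ᵥ y) ≤ euclNorm y * euclNorm (P *ᵥ y) := by
      rw [euclNorm_eq, euclNorm_eq, ← inner_eq_dot]
      exact real_inner_le_norm _ _
    have hNy : y ⬝ᵥ y = euclNorm y * euclNorm y := by
      rw [euclNorm_eq, ← inner_eq_dot, real_inner_self_eq_norm_mul_norm]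
    rcases eq_or_lt_of_le (euclNorm_nonneg y) with h0 | h0
    · rw [← h0]; positivity
    · have key : (⨅ i, hP.1.eigenvalues i) * euclNorm y ≤ r := by
        have h1 : (⨅ i, hP.1.eigenvalues i) * (euclNorm y * euclNorm y)
            ≤ euclNorm y * euclNorm (P *ᵥ y) := by
          rw [← hNy]; exact hray.trans hCS
        have h2 : (⨅ i, hP.1.eigenvalues i) * euclNorm y ≤ euclNorm (P *ᵥ y) := by
          have := (mul_le_mul_iff_of_pos_right h0).mp (by linarith [h1] : 
            ((⨅ i, hP.1.eigenvalues i) * euclNorm y) * euclNorm y 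
              ≤ euclNorm (P *ᵥ y) * euclNorm y)
          exact this
        exact h2.trans hy
      rw [le_div_iff₀ hlammin]
      linarith [key]
end
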